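/- arXiv:2007.13656 — 2 statements merged into one kernel-verified Lean document; each statement's English description precedes it below -/
import Mathlib

section
/- Suppose b, d : ℕ → ℝ are polynomial functions with d of degree at most 2, b - d of degree at most 1, d(0) = 0, b(x) > 0 and d(x+1) > 0 for all x ∈ ℕ, and ∑_{x≥1} ∏_{k=0}^{x} b(k)/d(k+1) < ∞. If moreover the eigenvalues λ_n = n·(b-d)'(slope) + (1/2) n(n-1)·(second difference of d) are strictly negative for all n ≥ 1, then d has degree exactly 1, i.e., d(x) = c·x for some c > 0. -/
/-!
Write `d x = x * (c₁ + c₂ x)`, using `d 0 = 0` and `deg d ≤ 2`. Positivity of `d (n + 1)` for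
all `n` forces `c₂ ≥ 0`. The second difference of `d` is `2 c₂`, so `λ_{n+1} = (n + 1) (s + c₂ n)`
with `s` the slope of `b - d`; negativity of all eigenvalues forces `c₂ ≤ 0`. Hence `d x = c₁ x`,
and `c₁ = d 1 > 0`.
-/

open Polynomial

theorem Polynomial.eval_eq_mul_of_natDegree_le_two_of_eval_zero {R : Type*} [CommRing R]
    {p : R[X]} (hp : p.natDegree ≤ 2) (h0 : p.eval 0 = 0) (x : R) :
    p.eval x = x * (p.coeff 1 + p.coeff 2 * x) := by
  rw [← coeff_zero_eq_eval_zero] at h0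
  rw [eval_eq_sum_range' (n := 3) (by omega)]
  simp only [Finset.sum_range_succ, Finset.sum_range_zero, h0]
  ring

theorem nonneg_of_forall_nat_pos_add_mul {K : Type*} [Field K] [LinearOrder K]
    [IsStrictOrderedRing K] [Archimedean K] {a b : K} (h : ∀ n : ℕ, 0 < a + b * n) : 0 ≤ b := by
  by_contra! hb
  obtain ⟨n, hn⟩ := exists_nat_gt (a / -b)
  have : a < n * -b := (div_lt_iff₀ (neg_pos.mpr hb)).mp hn
  linarith [h n]

theorem death_rate_linear_general (b d : ℕ → ℝ) (pd : Polynomial ℝ)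
    (hde : ∀ x : ℕ, d x = pd.eval (x : ℝ))
    (hdeg_d : pd.natDegree ≤ 2)
    (hd0 : d 0 = 0) (hd_pos : ∀ x : ℕ, 0 < d (x + 1))
    (heig : ∀ n : ℕ, 1 ≤ n →
      (n : ℝ) * ((b 1 - d 1) - (b 0 - d 0))
        + (1 / 2) * (n : ℝ) * ((n : ℝ) - 1) * (d 2 - 2 * d 1 + d 0) < 0) :
    ∃ c : ℝ, 0 < c ∧ ∀ x : ℕ, d x = c * (x : ℝ) := by
  set c₁ := pd.coeff 1
  set c₂ := pd.coeff 2
  set s := (b 1 - d 1) - (b 0 - d 0)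
  have hd : ∀ x : ℕ, d x = x * (c₁ + c₂ * x) := fun x => by
    rw [hde, eval_eq_mul_of_natDegree_le_two_of_eval_zero hdeg_d (by simpa [hde] using hd0)]
  have hc₂_nonneg : 0 ≤ c₂ := nonneg_of_forall_nat_pos_add_mul (a := c₁ + c₂) fun n => by
    have := hd_pos n
    rw [hd] at this
    push_cast at this
    linarith [pos_of_mul_pos_right this (by positivity)]
  have hc₂_nonpos : c₂ ≤ 0 :=
    neg_nonneg.mp <| nonneg_of_forall_nat_pos_add_mul (a := -s) fun n => by
      have heig_succ : (n + 1 : ℝ) * (s + c₂ * n) < 0 := by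
        have := heig (n + 1) (by omega)
        simp only [hd] at this
        push_cast at this
        linarith
      linarith [neg_of_mul_neg_right heig_succ (by positivity)]
  have hc₂ : c₂ = 0 := le_antisymm hc₂_nonpos hc₂_nonneg
  refine ⟨c₁, by simpa [hd, hc₂] using hd_pos 0, fun x => ?_⟩
  rw [hd, hc₂]
  ring

/-- Classification step: for a solvable birth-death process with state space ℕ,
the death rate polynomial has degree exactly one, i.e. `d x = c * x` with `c > 0`. -/
theorem death_rate_linear (b d : ℕ → ℝ) (pb pd : Polynomial ℝ)
    (hbe : ∀ x : ℕ, b x = pb.eval (x : ℝ)) (hde : ∀ x : ℕ, d x = pd.eval (x : ℝ))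
    (hdeg_d : pd.natDegree ≤ 2) (hdeg_bd : (pb - pd).natDegree ≤ 1)
    (hd0 : d 0 = 0) (hb_pos : ∀ x : ℕ, 0 < b x) (hd_pos : ∀ x : ℕ, 0 < d (x + 1))
    (hsum : Summable (fun x : ℕ => ∏ k ∈ Finset.range (x + 1), b k / d (k + 1)))
    (heig : ∀ n : ℕ, 1 ≤ n →
      (n : ℝ) * ((b 1 - d 1) - (b 0 - d 0))
        + (1 / 2) * (n : ℝ) * ((n : ℝ) - 1) * (d 2 - 2 * d 1 + d 0) < 0) :
    ∃ c : ℝ, 0 < c ∧ ∀ x : ℕ, d x = c * (x : ℝ) :=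
  death_rate_linear_general b d pd hde hdeg_d hd0 hd_pos heig
end

section
/- Let m : ℤ → ℝ be supported on a segment E of ℕ, solving the discrete Pearson equation d(x+1)m(x+1) - d(x)m(x) = (b(x)-d(x))m(x) for all x ∈ E. For any function Q : ℤ → ℝ, define the forward operator L f(x) = -((b(x)-d(x))f(x) - (b(x-1)-d(x-1))f(x-1)) + (d(x+1)f(x+1) - 2d(x)f(x) + d(x-1)f(x-1)), and the generator G f(x) = (b(x)-d(x))(f(x+1)-f(x)) + d(x)(f(x+1)-2f(x)+f(x-1)). Then L(m·Q)(x) = m(x)·G Q(x) for all x ∈ E. -/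
/-- The forward operator applied to `m * Q` equals `m` times the generator applied to `Q`,
as a consequence of the discrete Pearson equation. -/
theorem forward_op_eq_measure_mul_generator (b d m Q : ℤ → ℝ) (E : Set ℤ)
    (hsupp : ∀ x ∉ E, m x = 0)
    (hPearson : ∀ x : ℤ, d (x + 1) * m (x + 1) - d x * m x = (b x - d x) * m x) :
    ∀ x ∈ E,
      (-(((b x - d x) * (m x * Q x)) - ((b (x - 1) - d (x - 1)) * (m (x - 1) * Q (x - 1))))
        + (d (x + 1) * (m (x + 1) * Q (x + 1)) - 2 * (d x * (m x * Q x))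
            + d (x - 1) * (m (x - 1) * Q (x - 1))))
      = m x * ((b x - d x) * (Q (x + 1) - Q x)
          + d x * (Q (x + 1) - 2 * Q x + Q (x - 1))) := by
  intro x _
  have h1 := hPearson x
  have h2 := hPearson (x - 1)
  rw [sub_add_cancel] at h2
  linear_combination Q (x + 1) * h1 + - Q (x - 1) * h2
end
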